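/- arXiv:2503.22867 — 2 statements merged into one kernel-verified Lean document; each statement's English description precedes it below -/
import Mathlib

section
/- (Gradient domination) For a finite Markov game under direct policy parameterization satisfying Assumption 1, for every θ = (θ_1,…,θ_N) ∈ X, every agent i, and every θ_i' ∈ X_i, writing θ' = (θ_i', θ_{-i}), one has J_i(θ_i', θ_{-i}) − J_i(θ_i, θ_{-i}) ≤ ‖d_{θ'}/d_θ‖_∞ · max_{θ̄_i ∈ X_i} (θ̄_i − θ_i)ᵀ ∇_{θ_i} J_i(θ), where ‖d_{θ'}/d_θ‖_∞ := max_{s ∈ S} d_{θ'}(s)/d_θ(s). -/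
open scoped BigOperators

/-! Common framework for finite Markov games under direct policy
parameterization.  Agents are indexed by `Fin N`, the state space `S` and the
action spaces `A i` are finite.  A policy profile is `θ : ∀ i, S → A i → ℝ`,
feasible when each `θ i s` lies in the probability simplex. -/

section MGDefs

variable {N : ℕ} {S : Type} {A : Fin N → Type}
variable [Fintype S] [∀ i, Fintype (A i)]

/-- Joint policy `π_θ(a|s) = ∏ i, θ_i(a_i|s)` induced by the per-agent
directly parameterized policies. -/
def jointPi (θ : ∀ i, S → A i → ℝ) : S → (∀ i, A i) → ℝ :=
  fun s a => ∏ i, θ i s (a i)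

/-- Distribution of the state at time `t` under transition kernel `P`,
policy `π` and initial distribution `ρ`. -/
def stateDist {σ α : Type} [Fintype σ] [Fintype α] (P : σ → α → σ → ℝ)
    (π : σ → α → ℝ) (ρ : σ → ℝ) : ℕ → σ → ℝ
  | 0 => ρ
  | t + 1 => fun s' => ∑ s, ∑ a, stateDist P π ρ t s * π s a * P s a s'

/-- Expected discounted sum `E[∑ₜ γ^t f(s_t, a_t)]` of a state-action
function `f`, under kernel `P`, policy `π`, and initial distribution `ρ`. -/
noncomputable def expDisc {σ α : Type} [Fintype σ] [Fintype α] (γ : ℝ)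
    (P : σ → α → σ → ℝ) (π : σ → α → ℝ) (ρ : σ → ℝ) (f : σ → α → ℝ) : ℝ :=
  ∑' t : ℕ, γ ^ t * ∑ s, ∑ a, stateDist P π ρ t s * π s a * f s a

/-- Dirac (point-mass) distribution at `s`. -/
def dirac {σ : Type} [DecidableEq σ] (s : σ) : σ → ℝ :=
  fun s' => if s' = s then 1 else 0

/-- Value function `V^θ(s) = E[∑ₜ γ^t f(s_t,a_t) | π_θ, s_0 = s]`. -/
noncomputable def valueV [DecidableEq S] (γ : ℝ) (P : S → (∀ i, A i) → S → ℝ)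
    (θ : ∀ i, S → A i → ℝ) (f : S → (∀ i, A i) → ℝ) (s : S) : ℝ :=
  expDisc γ P (jointPi θ) (dirac s) f

/-- Total objective `J(θ) = E_{s₀ ∼ ρ}[∑ₜ γ^t f(s_t,a_t) | π_θ]`. -/
noncomputable def Jtot (γ : ℝ) (P : S → (∀ i, A i) → S → ℝ) (ρ : S → ℝ)
    (θ : ∀ i, S → A i → ℝ) (f : S → (∀ i, A i) → ℝ) : ℝ :=
  expDisc γ P (jointPi θ) ρ f

/-- The feasible set `X = X_1 × ⋯ × X_N`, `X_i = Δ(A_i)^S`. -/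
def feasible (θ : ∀ i, S → A i → ℝ) : Prop :=
  ∀ i, ∀ s, θ i s ∈ stdSimplex ℝ (A i)

/-- Discounted state-visitation measure
`d_θ(s) = (1-γ) E_{s₀∼ρ} ∑ₜ γ^t Pr^θ(s_t = s | s₀)`. -/
noncomputable def visit (γ : ℝ) (P : S → (∀ i, A i) → S → ℝ)
    (θ : ∀ i, S → A i → ℝ) (ρ : S → ℝ) (s : S) : ℝ :=
  (1 - γ) * ∑' t : ℕ, γ ^ t * stateDist P (jointPi θ) ρ t s

end MGDefs

/-! Agent `i`'s objective along a unilateral deviation `y` is `ρ ⬝ᵥ V_y` with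
`V_y = (1 - γ T_y)⁻¹ g_y`, where the transition operator `T_y` and the reward vector `g_y` depend
linearly on `y`. This resolvent structure gives both the performance difference
`(1 - γ)(J(y) - J(θ_i)) = d_y ⬝ᵥ A(y - θ_i)` and the gradient
`(1 - γ) ∇J(θ_i)·u = d_θ ⬝ᵥ A(u)`, where `A(u)(s) = ∑_b u(s, b) Q_i(s, b)`. Bounding `A(θ_i' - θ_i)`
statewise by the nonnegative advantage of a greedy policy and `d_y` by `‖d_y / d_θ‖_∞ d_θ` yields
the claim. -/

open scoped Ring

section LinearFixedPoint

variable {𝕜 Y E : Type*} [NontriviallyNormedField 𝕜] [NormedAddCommGroup Y] [NormedSpace 𝕜 Y]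
  [NormedAddCommGroup E] [NormedSpace 𝕜 E]

/-- The solution `V` of `V = g y + L y V` (junk `0` when `1 - L y` is not invertible). -/
noncomputable def linearFixedPoint (L : Y →L[𝕜] E →L[𝕜] E) (g : Y →L[𝕜] E) (y : Y) : E :=
  (1 - L y)⁻¹ʳ (g y)

variable (L : Y →L[𝕜] E →L[𝕜] E) (g : Y →L[𝕜] E)

lemma linearFixedPoint_eq {y : Y} (hy : IsUnit (1 - L y)) :
    linearFixedPoint L g y = g y + L y (linearFixedPoint L g y) := by
  have h : (1 - L y) (linearFixedPoint L g y) = g y := by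
    rw [linearFixedPoint, ← mul_apply_eq_comp, Ring.mul_inverse_cancel _ hy,
      one_apply_eq_self]
  rw [← h]
  simp

lemma linearFixedPoint_sub {y y' : Y} (hy : IsUnit (1 - L y)) (hy' : IsUnit (1 - L y')) :
    linearFixedPoint L g y' - linearFixedPoint L g y
      = (1 - L y')⁻¹ʳ (g (y' - y) + L (y' - y) (linearFixedPoint L g y)) := by
  set V := linearFixedPoint L g y
  have hV : (1 - L y')⁻¹ʳ ((1 - L y') V) = V := by
    rw [← mul_apply_eq_comp, Ring.inverse_mul_cancel _ hy', one_apply_eq_self]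
  have hbell : V = g y + L y V := linearFixedPoint_eq L g hy
  conv_lhs => rw [← hV, linearFixedPoint, ← map_sub]
  congr 1
  simp only [map_sub, sub_apply, one_apply_eq_self]
  linear_combination (norm := module) -hbell

variable [CompleteSpace E]

lemma hasFDerivAt_linearFixedPoint {y : Y} (hy : IsUnit (1 - L y)) :
    HasFDerivAt (linearFixedPoint L g)
      ((1 - L y)⁻¹ʳ ∘L (g + (ContinuousLinearMap.apply 𝕜 E (linearFixedPoint L g y)) ∘L L)) y := by
  have hsub : HasFDerivAt (fun z => 1 - L z) (-L) y := by
    simpa using L.hasFDerivAt.const_sub 1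
  have hinv := hasFDerivAt_ringInverse (𝕜 := 𝕜) hy.unit
  rw [← Ring.inverse_unit, hy.unit_spec] at hinv
  refine ((hinv.comp y hsub).clm_apply g.hasFDerivAt).congr_fderiv ?_
  ext u
  simp [linearFixedPoint]

end LinearFixedPoint

lemma sum_mul_le_of_mem_stdSimplex {ι : Type*} [Fintype ι] {p f : ι → ℝ} {c : ℝ}
    (hp : p ∈ stdSimplex ℝ ι) (hf : ∀ i, f i ≤ c) : ∑ i, p i * f i ≤ c :=
  calc ∑ i, p i * f i ≤ ∑ i, p i * c :=
        Finset.sum_le_sum fun i _ => mul_le_mul_of_nonneg_left (hf i) (hp.1 i)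
    _ = c := by rw [← Finset.sum_mul, hp.2, one_mul]

lemma abs_sum_mul_le_of_mem_stdSimplex {ι : Type*} [Fintype ι] {p f : ι → ℝ} {c : ℝ}
    (hp : p ∈ stdSimplex ℝ ι) (hf : ∀ i, |f i| ≤ c) : |∑ i, p i * f i| ≤ c := by
  refine abs_le.2 ⟨?_, sum_mul_le_of_mem_stdSimplex hp fun i => (abs_le.1 (hf i)).2⟩
  have := sum_mul_le_of_mem_stdSimplex hp fun i => neg_le.1 (abs_le.1 (hf i)).1
  simp only [mul_neg, Finset.sum_neg_distrib] at this
  linarith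

lemma exists_greedy_policy {S B : Type*} [Fintype B] [DecidableEq B] [Nonempty B]
    (Q : S → B → ℝ) :
    ∃ θ : S → B → ℝ, (∀ s, θ s ∈ stdSimplex ℝ B) ∧
      ∀ s, ∀ p ∈ stdSimplex ℝ B, ∑ b, p b * Q s b ≤ ∑ b, θ s b * Q s b := by
  choose b hb using fun s => Finset.exists_max_image Finset.univ (Q s) Finset.univ_nonempty
  refine ⟨fun s => Pi.single (b s) 1, fun s => single_mem_stdSimplex ℝ (b s), fun s p hp => ?_⟩
  simpa [Pi.single_apply] using
    sum_mul_le_of_mem_stdSimplex hp fun b' => (hb s).2 b' (Finset.mem_univ b')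

lemma dotProduct_le_sup'_div_mul_dotProduct {ι : Type*} [Fintype ι] [Nonempty ι]
    {d d' a b : ι → ℝ} (hd : ∀ i, 0 < d i) (hd' : ∀ i, 0 ≤ d' i) (hab : ∀ i, a i ≤ b i)
    (hb : ∀ i, 0 ≤ b i) :
    d' ⬝ᵥ a ≤ Finset.univ.sup' Finset.univ_nonempty (fun i => d' i / d i) * (d ⬝ᵥ b) := by
  set C := Finset.univ.sup' Finset.univ_nonempty fun i => d' i / d i
  have hC : ∀ i, d' i ≤ C * d i := fun i =>
    (div_le_iff₀ (hd i)).1 (Finset.le_sup' (fun i => d' i / d i) (Finset.mem_univ i))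
  calc d' ⬝ᵥ a ≤ d' ⬝ᵥ b := Finset.sum_le_sum fun i _ => mul_le_mul_of_nonneg_left (hab i) (hd' i)
    _ ≤ ∑ i, C * d i * b i := Finset.sum_le_sum fun i _ => mul_le_mul_of_nonneg_right (hC i) (hb i)
    _ = C * (d ⬝ᵥ b) := by simp only [dotProduct, Finset.mul_sum, mul_assoc]

lemma le_sSup_of_mem_stdSimplex_pi {S B : Type*} [Finite S] [Fintype B]
    {f : (S → B → ℝ) → ℝ} (hf : Continuous f) {θ : S → B → ℝ}
    (hθ : ∀ s, θ s ∈ stdSimplex ℝ B) :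
    f θ ≤ sSup {x | ∃ θ' : S → B → ℝ, (∀ s, θ' s ∈ stdSimplex ℝ B) ∧ x = f θ'} := by
  have hset : {x | ∃ θ' : S → B → ℝ, (∀ s, θ' s ∈ stdSimplex ℝ B) ∧ x = f θ'}
      = f '' Set.univ.pi fun _ => stdSimplex ℝ B := by
    ext x
    simp [eq_comm]
  rw [hset]
  exact le_csSup ((isCompact_univ_pi fun _ => isCompact_stdSimplex ℝ B).image hf).bddAbove
    ⟨θ, fun s _ => hθ s, rfl⟩

section DiscountedSums

variable {σ α : Type} [Fintype α]

noncomputable def rewardOp (f : σ → α → ℝ) : (σ → α → ℝ) →ₗ[ℝ] (σ → ℝ) where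
  toFun π s := ∑ a, π s a * f s a
  map_add' _ _ := by funext; simp [add_mul, Finset.sum_add_distrib]
  map_smul' _ _ := by funext; simp [Finset.mul_sum, mul_assoc]

lemma rewardOp_apply (f π : σ → α → ℝ) (s : σ) :
    rewardOp f π s = ∑ a, π s a * f s a := rfl

variable [Fintype σ]

noncomputable def transitionOp (P : σ → α → σ → ℝ) :
    (σ → α → ℝ) →ₗ[ℝ] (σ → ℝ) →L[ℝ] (σ → ℝ) :=
  LinearMap.toContinuousLinearMap.toLinearMap ∘ₗ
    LinearMap.mk₂ ℝ (fun π v s => ∑ a, π s a * ∑ s', P s a s' * v s')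
      (by intros; funext; simp [add_mul, Finset.sum_add_distrib])
      (by intros; funext; simp [Finset.mul_sum, mul_assoc])
      (by intros; funext; simp [mul_add, Finset.sum_add_distrib])
      (by intros; funext; simp [Finset.mul_sum, mul_left_comm])

lemma transitionOp_apply (P : σ → α → σ → ℝ) (π : σ → α → ℝ) (v : σ → ℝ) (s : σ) :
    transitionOp P π v s = ∑ a, π s a * ∑ s', P s a s' * v s' := rfl

lemma norm_transitionOp_le_one {P : σ → α → σ → ℝ} (hP : ∀ s a, P s a ∈ stdSimplex ℝ σ)
    {π : σ → α → ℝ} (hπ : ∀ s, π s ∈ stdSimplex ℝ α) : ‖transitionOp P π‖ ≤ 1 := by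
  refine ContinuousLinearMap.opNorm_le_bound _ zero_le_one fun v => ?_
  rw [one_mul, pi_norm_le_iff_of_nonneg (norm_nonneg v)]
  intro s
  rw [Real.norm_eq_abs, transitionOp_apply]
  exact abs_sum_mul_le_of_mem_stdSimplex (hπ s) fun a =>
    abs_sum_mul_le_of_mem_stdSimplex (hP s a) fun s' => norm_le_pi_norm v s'

lemma stateDist_dotProduct (P : σ → α → σ → ℝ) (π : σ → α → ℝ) (ρ : σ → ℝ) (t : ℕ)
    (v : σ → ℝ) : stateDist P π ρ t ⬝ᵥ v = ρ ⬝ᵥ (transitionOp P π ^ t) v := by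
  induction t generalizing v with
  | zero => simp [stateDist]
  | succ t ih =>
    rw [pow_succ, mul_apply_eq_comp, ← ih]
    simp only [stateDist, dotProduct, transitionOp_apply, Finset.sum_mul, Finset.mul_sum]
    rw [Finset.sum_comm]
    refine Finset.sum_congr rfl fun s _ => ?_
    rw [Finset.sum_comm]
    exact Finset.sum_congr rfl fun a _ => Finset.sum_congr rfl fun s' _ => by ring

lemma hasSum_discounted_stateDist_dotProduct {γ : ℝ} {P : σ → α → σ → ℝ} {π : σ → α → ℝ}
    (h : ‖γ • transitionOp P π‖ < 1) (ρ v : σ → ℝ) :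
    HasSum (fun t => γ ^ t * (stateDist P π ρ t ⬝ᵥ v))
      (ρ ⬝ᵥ (1 - γ • transitionOp P π)⁻¹ʳ v) := by
  have hterm : ∀ t : ℕ, γ ^ t * (stateDist P π ρ t ⬝ᵥ v)
      = ρ ⬝ᵥ ((γ • transitionOp P π) ^ t) v := by
    intro t
    rw [smul_pow, smul_apply, dotProduct_smul, stateDist_dotProduct, smul_eq_mul]
  rw [funext hterm]
  exact ((hasSum_geom_series_inverse _ h).mapL (ContinuousLinearMap.apply ℝ _ v)).mapL
    (LinearMap.toContinuousLinearMap (dotProductBilin ℝ ℝ ρ))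

lemma expDisc_eq_dotProduct {γ : ℝ} {P : σ → α → σ → ℝ} {π : σ → α → ℝ}
    (h : ‖γ • transitionOp P π‖ < 1) (ρ : σ → ℝ) (f : σ → α → ℝ) :
    expDisc γ P π ρ f = ρ ⬝ᵥ (1 - γ • transitionOp P π)⁻¹ʳ (rewardOp f π) := by
  refine Eq.trans ?_ (hasSum_discounted_stateDist_dotProduct h ρ _).tsum_eq
  refine tsum_congr fun t => ?_
  simp only [dotProduct, rewardOp_apply, Finset.mul_sum, mul_assoc]

lemma discounted_stateDist_dotProduct {γ : ℝ} {P : σ → α → σ → ℝ} {π : σ → α → ℝ}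
    (h : ‖γ • transitionOp P π‖ < 1) (ρ w : σ → ℝ) :
    (fun s => ∑' t, γ ^ t * stateDist P π ρ t s) ⬝ᵥ w
      = ρ ⬝ᵥ (1 - γ • transitionOp P π)⁻¹ʳ w := by
  classical
  have hs : ∀ s, HasSum (fun t => γ ^ t * stateDist P π ρ t s * w s)
      ((∑' t, γ ^ t * stateDist P π ρ t s) * w s) := by
    intro s
    have := (hasSum_discounted_stateDist_dotProduct h ρ (Pi.single s 1)).summable
    simp only [dotProduct_single_one] at this
    exact this.hasSum.mul_right (w s)
  refine (hasSum_sum fun s _ => hs s).unique ?_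
  convert hasSum_discounted_stateDist_dotProduct h ρ w using 2 with t
  simp only [dotProduct, Finset.mul_sum, mul_assoc]

end DiscountedSums

section Game

variable {N : ℕ} {S : Type} {A : Fin N → Type}

lemma jointPi_update (θ : ∀ j, S → A j → ℝ) (i : Fin N) (y : S → A i → ℝ) (s : S)
    (a : ∀ j, A j) :
    jointPi (Function.update θ i y) s a = y s (a i) * ∏ j ∈ Finset.univ.erase i, θ j s (a j) := by
  have h := Function.apply_update (fun j (θj : S → A j → ℝ) => θj s (a j)) θ i y
  simp only [jointPi, h, Finset.prod_update_of_mem (Finset.mem_univ i),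
    Finset.sdiff_singleton_eq_erase]

noncomputable def jointPiUpdate (θ : ∀ j, S → A j → ℝ) (i : Fin N) :
    (S → A i → ℝ) →ₗ[ℝ] (S → (∀ j, A j) → ℝ) where
  toFun y := jointPi (Function.update θ i y)
  map_add' _ _ := by funext; simp [jointPi_update, add_mul]
  map_smul' _ _ := by funext; simp [jointPi_update, mul_assoc]

variable [∀ j, Fintype (A j)]

lemma jointPi_mem_stdSimplex {θ : ∀ j, S → A j → ℝ} (hθ : feasible θ) (s : S) :
    jointPi θ s ∈ stdSimplex ℝ (∀ j, A j) := by
  refine ⟨fun a => Finset.prod_nonneg fun j _ => (hθ j s).1 (a j), ?_⟩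
  simp only [jointPi]
  rw [← Fintype.piFinset_univ, ← Finset.prod_univ_sum]
  exact Finset.prod_eq_one fun j _ => (hθ j s).2

lemma feasible_update {θ : ∀ j, S → A j → ℝ} (hθ : feasible θ) {i : Fin N}
    {y : S → A i → ℝ} (hy : ∀ s, y s ∈ stdSimplex ℝ (A i)) :
    feasible (Function.update θ i y) := by
  intro j s
  rcases eq_or_ne j i with rfl | h
  · simpa using hy s
  · simpa [h] using hθ j s

variable [Fintype S]

lemma visit_dotProduct {γ : ℝ} {P : S → (∀ j, A j) → S → ℝ} {θ : ∀ j, S → A j → ℝ}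
    (h : ‖γ • transitionOp P (jointPi θ)‖ < 1) (ρ w : S → ℝ) :
    visit γ P θ ρ ⬝ᵥ w = (1 - γ) * (ρ ⬝ᵥ (1 - γ • transitionOp P (jointPi θ))⁻¹ʳ w) := by
  rw [← discounted_stateDist_dotProduct h, ← smul_eq_mul, ← smul_dotProduct]
  rfl

noncomputable def agentTransition (γ : ℝ) (P : S → (∀ j, A j) → S → ℝ)
    (θ : ∀ j, S → A j → ℝ) (i : Fin N) : (S → A i → ℝ) →L[ℝ] (S → ℝ) →L[ℝ] (S → ℝ) :=
  LinearMap.toContinuousLinearMap (γ • transitionOp P ∘ₗ jointPiUpdate θ i)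

noncomputable def agentReward (f : S → (∀ j, A j) → ℝ) (θ : ∀ j, S → A j → ℝ) (i : Fin N) :
    (S → A i → ℝ) →L[ℝ] (S → ℝ) :=
  LinearMap.toContinuousLinearMap (rewardOp f ∘ₗ jointPiUpdate θ i)

lemma agentTransition_apply (γ : ℝ) (P : S → (∀ j, A j) → S → ℝ) (θ : ∀ j, S → A j → ℝ)
    (i : Fin N) (y : S → A i → ℝ) :
    agentTransition γ P θ i y = γ • transitionOp P (jointPi (Function.update θ i y)) := rfl

lemma agentReward_apply (f : S → (∀ j, A j) → ℝ) (θ : ∀ j, S → A j → ℝ) (i : Fin N)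
    (y : S → A i → ℝ) : agentReward f θ i y = rewardOp f (jointPi (Function.update θ i y)) := rfl

lemma norm_agentTransition_lt_one {γ : ℝ} (hγ0 : 0 ≤ γ) (hγ1 : γ < 1)
    {P : S → (∀ j, A j) → S → ℝ} (hP : ∀ s a, P s a ∈ stdSimplex ℝ S)
    {θ : ∀ j, S → A j → ℝ} (hθ : feasible θ) {i : Fin N}
    {y : S → A i → ℝ} (hy : ∀ s, y s ∈ stdSimplex ℝ (A i)) :
    ‖agentTransition γ P θ i y‖ < 1 := by
  have hT := norm_transitionOp_le_one hP (jointPi_mem_stdSimplex (feasible_update hθ hy))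
  rw [agentTransition_apply, norm_smul, Real.norm_eq_abs, abs_of_nonneg hγ0]
  nlinarith

lemma Jtot_update_eq {γ : ℝ} {P : S → (∀ j, A j) → S → ℝ} {θ : ∀ j, S → A j → ℝ} {i : Fin N}
    {y : S → A i → ℝ} (h : ‖agentTransition γ P θ i y‖ < 1) (ρ : S → ℝ)
    (f : S → (∀ j, A j) → ℝ) :
    Jtot γ P ρ (Function.update θ i y) f
      = ρ ⬝ᵥ linearFixedPoint (agentTransition γ P θ i) (agentReward f θ i) y :=
  expDisc_eq_dotProduct h ρ f

variable [DecidableEq S]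

lemma linearFixedPoint_agent_self {γ : ℝ} {P : S → (∀ j, A j) → S → ℝ}
    {θ : ∀ j, S → A j → ℝ} {i : Fin N} (h : ‖agentTransition γ P θ i (θ i)‖ < 1)
    (f : S → (∀ j, A j) → ℝ) :
    linearFixedPoint (agentTransition γ P θ i) (agentReward f θ i) (θ i) = valueV γ P θ f := by
  rw [agentTransition_apply, Function.update_eq_self] at h
  funext s
  rw [valueV, expDisc_eq_dotProduct h]
  simp [linearFixedPoint, agentTransition_apply, agentReward_apply, dotProduct, dirac]

/-- Agent `i`'s Q-function `Q_i^θ(s, b)`, with the other agents' actions averaged out. -/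
noncomputable def agentQ [∀ j, DecidableEq (A j)] (γ : ℝ) (P : S → (∀ j, A j) → S → ℝ)
    (θ : ∀ j, S → A j → ℝ) (i : Fin N) (f : S → (∀ j, A j) → ℝ) (s : S) (b : A i) : ℝ :=
  ∑ a with a i = b, (∏ j ∈ Finset.univ.erase i, θ j s (a j)) *
    (f s a + γ * ∑ s', P s a s' * valueV γ P θ f s')

lemma agentReward_add_agentTransition_apply [∀ j, DecidableEq (A j)] (γ : ℝ)
    (P : S → (∀ j, A j) → S → ℝ) (θ : ∀ j, S → A j → ℝ) (i : Fin N) (f : S → (∀ j, A j) → ℝ)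
    (u : S → A i → ℝ) (s : S) :
    (agentReward f θ i u + agentTransition γ P θ i u (valueV γ P θ f)) s
      = ∑ b, u s b * agentQ γ P θ i f s b := by
  have hjoint : (agentReward f θ i u + agentTransition γ P θ i u (valueV γ P θ f)) s
      = ∑ a, jointPi (Function.update θ i u) s a *
          (f s a + γ * ∑ s', P s a s' * valueV γ P θ f s') := by
    simp only [Pi.add_apply, agentReward_apply, agentTransition_apply, smul_apply,
      Pi.smul_apply, rewardOp_apply, transitionOp_apply, smul_eq_mul, mul_add,
      Finset.sum_add_distrib]
    rw [Finset.mul_sum]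
    exact congrArg _ (Finset.sum_congr rfl fun a _ => by ring)
  rw [hjoint, ← Finset.sum_fiberwise Finset.univ (fun a => a i)]
  refine Finset.sum_congr rfl fun b _ => ?_
  rw [agentQ, Finset.mul_sum]
  refine Finset.sum_congr rfl fun a ha => ?_
  rw [jointPi_update, (Finset.mem_filter.1 ha).2]
  ring

variable [∀ j, DecidableEq (A j)] {γ : ℝ} (hγ0 : 0 ≤ γ) (hγ1 : γ < 1)
  {P : S → (∀ j, A j) → S → ℝ} (hP : ∀ s a, P s a ∈ stdSimplex ℝ S)
  {θ : ∀ j, S → A j → ℝ} (hθ : feasible θ) {i : Fin N}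
include hγ0 hγ1 hP hθ

lemma performance_difference {y : S → A i → ℝ} (hy : ∀ s, y s ∈ stdSimplex ℝ (A i))
    (ρ : S → ℝ) (f : S → (∀ j, A j) → ℝ) :
    (1 - γ) * (Jtot γ P ρ (Function.update θ i y) f - Jtot γ P ρ θ f)
      = visit γ P (Function.update θ i y) ρ ⬝ᵥ
          fun s => ∑ b, (y - θ i) s b * agentQ γ P θ i f s b := by
  have hL := norm_agentTransition_lt_one hγ0 hγ1 hP hθ hy
  have hL₀ := norm_agentTransition_lt_one hγ0 hγ1 hP hθ (hθ i)
  have hJ₀ := Jtot_update_eq hL₀ ρ f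
  rw [Function.update_eq_self] at hJ₀
  rw [Jtot_update_eq hL ρ f, hJ₀, ← dotProduct_sub,
    linearFixedPoint_sub _ _ (isUnit_one_sub_of_norm_lt_one hL₀)
      (isUnit_one_sub_of_norm_lt_one hL),
    linearFixedPoint_agent_self hL₀, visit_dotProduct hL]
  congr 3
  funext s
  exact agentReward_add_agentTransition_apply γ P θ i f (y - θ i) s

lemma fderiv_Jtot_update (ρ : S → ℝ) (f : S → (∀ j, A j) → ℝ) (u : S → A i → ℝ) :
    (1 - γ) * fderiv ℝ (fun y => Jtot γ P ρ (Function.update θ i y) f) (θ i) u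
      = visit γ P θ ρ ⬝ᵥ fun s => ∑ b, u s b * agentQ γ P θ i f s b := by
  have hL₀ := norm_agentTransition_lt_one hγ0 hγ1 hP hθ (hθ i)
  have hJ : (fun y => Jtot γ P ρ (Function.update θ i y) f) =ᶠ[nhds (θ i)]
      fun y => ρ ⬝ᵥ linearFixedPoint (agentTransition γ P θ i) (agentReward f θ i) y := by
    filter_upwards [(isOpen_lt (agentTransition γ P θ i).continuous.norm
      continuous_const).mem_nhds hL₀] with y hy using Jtot_update_eq hy ρ f
  have hD := ((LinearMap.toContinuousLinearMap (dotProductBilin ℝ ℝ ρ)).hasFDerivAt.comp (θ i)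
    (hasFDerivAt_linearFixedPoint _ _ (isUnit_one_sub_of_norm_lt_one hL₀))).congr_of_eventuallyEq hJ
  have hT : agentTransition γ P θ i (θ i) = γ • transitionOp P (jointPi θ) := by
    rw [agentTransition_apply, Function.update_eq_self]
  rw [hD.fderiv, linearFixedPoint_agent_self hL₀, hT, visit_dotProduct (hT ▸ hL₀)]
  change (1 - γ) * (ρ ⬝ᵥ (1 - γ • transitionOp P (jointPi θ))⁻¹ʳ
    (agentReward f θ i u + agentTransition γ P θ i u (valueV γ P θ f))) = _
  congr 3
  funext s
  exact agentReward_add_agentTransition_apply γ P θ i f u s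

end Game

theorem gradient_domination_general
    {N : ℕ} {S : Type} {A : Fin N → Type}
    [Fintype S] [DecidableEq S] [Nonempty S]
    [∀ i, Fintype (A i)] [∀ i, Nonempty (A i)]
    (γ : ℝ) (hγ0 : 0 ≤ γ) (hγ1 : γ < 1)
    (P : S → (∀ i, A i) → S → ℝ) (hP : ∀ s a, P s a ∈ stdSimplex ℝ S)
    (r : Fin N → S → (∀ i, A i) → ℝ)
    (ρ : S → ℝ)
    -- Assumption 1 : d_θ(s) > 0 for all s and all feasible θ
    (hA1 : ∀ ϑ : ∀ i, S → A i → ℝ, feasible ϑ → ∀ s : S, 0 < visit γ P ϑ ρ s)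
    (θ : ∀ i, S → A i → ℝ) (hθ : feasible θ)
    (i : Fin N) (θi' : S → A i → ℝ) (hθi' : ∀ s, θi' s ∈ stdSimplex ℝ (A i)) :
    Jtot γ P ρ (Function.update θ i θi') (r i) - Jtot γ P ρ θ (r i)
      ≤ (Finset.univ.sup' Finset.univ_nonempty fun s : S =>
            visit γ P (Function.update θ i θi') ρ s / visit γ P θ ρ s)
        * sSup {x : ℝ | ∃ θb : S → A i → ℝ,
            (∀ s, θb s ∈ stdSimplex ℝ (A i)) ∧
            x = fderiv ℝ (fun y : S → A i → ℝ =>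
                  Jtot γ P ρ (Function.update θ i y) (r i)) (θ i) (θb - θ i)} := by
  classical
  set C := Finset.univ.sup' Finset.univ_nonempty fun s : S =>
    visit γ P (Function.update θ i θi') ρ s / visit γ P θ ρ s
  have hd := hA1 θ hθ
  have hd' := hA1 _ (feasible_update hθ hθi')
  obtain ⟨θg, hθg, hgreedy⟩ := exists_greedy_policy (agentQ γ P θ i (r i))
  have hadv : ∀ s, ∑ b, (θi' - θ i) s b * agentQ γ P θ i (r i) s b
      ≤ ∑ b, (θg - θ i) s b * agentQ γ P θ i (r i) s b
      ∧ 0 ≤ ∑ b, (θg - θ i) s b * agentQ γ P θ i (r i) s b := by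
    intro s
    simp only [Pi.sub_apply, sub_mul, Finset.sum_sub_distrib]
    exact ⟨by linarith [hgreedy s _ (hθi' s)], by linarith [hgreedy s _ (hθ i s)]⟩
  have key : (1 - γ) * (Jtot γ P ρ (Function.update θ i θi') (r i) - Jtot γ P ρ θ (r i))
      ≤ (1 - γ) * (C *
          fderiv ℝ (fun y => Jtot γ P ρ (Function.update θ i y) (r i)) (θ i) (θg - θ i)) := by
    rw [performance_difference hγ0 hγ1 hP hθ hθi', mul_left_comm,
      fderiv_Jtot_update hγ0 hγ1 hP hθ]
    exact dotProduct_le_sup'_div_mul_dotProduct hd (fun s => (hd' s).le)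
      (fun s => (hadv s).1) (fun s => (hadv s).2)
  obtain ⟨s₀⟩ := ‹Nonempty S›
  have hC : 0 ≤ C := Finset.le_sup'_of_le _ (Finset.mem_univ s₀) (div_nonneg (hd' s₀).le (hd s₀).le)
  refine (le_of_mul_le_mul_left key (sub_pos.2 hγ1)).trans (mul_le_mul_of_nonneg_left ?_ hC)
  exact le_sSup_of_mem_stdSimplex_pi
    ((ContinuousLinearMap.continuous _).comp (continuous_sub_right _)) hθg

/-- **Gradient domination.** For a finite Markov game under
direct policy parameterization satisfying Assumption 1, the improvement of a
unilateral deviation of agent `i` is bounded by the distribution-mismatch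
coefficient `‖d_{θ'}/d_θ‖_∞` times the maximal feasible ascent direction of
agent `i`'s gradient. -/
theorem gradient_domination
    {N : ℕ} {S : Type} {A : Fin N → Type}
    [Fintype S] [DecidableEq S] [Nonempty S]
    [∀ i, Fintype (A i)] [∀ i, Nonempty (A i)]
    (γ : ℝ) (hγ0 : 0 ≤ γ) (hγ1 : γ < 1)
    (P : S → (∀ i, A i) → S → ℝ) (hP : ∀ s a, P s a ∈ stdSimplex ℝ S)
    (r : Fin N → S → (∀ i, A i) → ℝ)
    (ρ : S → ℝ) (hρ : ρ ∈ stdSimplex ℝ S)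
    -- Assumption 1 : d_θ(s) > 0 for all s and all feasible θ
    (hA1 : ∀ ϑ : ∀ i, S → A i → ℝ, feasible ϑ → ∀ s : S, 0 < visit γ P ϑ ρ s)
    (θ : ∀ i, S → A i → ℝ) (hθ : feasible θ)
    (i : Fin N) (θi' : S → A i → ℝ) (hθi' : ∀ s, θi' s ∈ stdSimplex ℝ (A i)) :
    Jtot γ P ρ (Function.update θ i θi') (r i) - Jtot γ P ρ θ (r i)
      ≤ (Finset.univ.sup' Finset.univ_nonempty fun s : S =>
            visit γ P (Function.update θ i θi') ρ s / visit γ P θ ρ s)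
        * sSup {x : ℝ | ∃ θb : S → A i → ℝ,
            (∀ s, θb s ∈ stdSimplex ℝ (A i)) ∧
            x = fderiv ℝ (fun y : S → A i → ℝ =>
                  Jtot γ P ρ (Function.update θ i y) (r i)) (θ i) (θb - θ i)} :=
  gradient_domination_general γ hγ0 hγ1 P hP r ρ hA1 θ hθ i θi' hθi'
end

section
/- (MPG construction from mixed rewards) Consider a finite product-structured Markov game in which each agent i's reward has the mixed form r_i(s_t, a_t) = α·r_i^self(s_{i,t}, a_{i,t}) + β·Σ_{j∈N, j≠i} r_ij(s_{i,t}, s_{j,t}, a_{i,t}, a_{j,t}) for real constants α, β, where r_ij(s_i, s_j, a_i, a_j) = r_ji(s_j, s_i, a_j, a_i) for all i ≠ j, the transition kernel factorizes as P(s'|s,a) = ∏_{i=1}^N P_i(s_i'|s_i,a_i), the initial state distribution is a product ρ = ρ_1 ⊗ ⋯ ⊗ ρ_N, and each agent uses a local policy π_{i,θ_i}(a_i|s_i). Then the game is a Markov potential game with potential function φ(s_t,a_t) = α·Σ_{i∈N} r_i^self(s_{i,t}, a_{i,t}) + β·Σ_{i∈N} Σ_{j∈N, j<i} r_ij(s_{i,t},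 s_{j,t}, a_{i,t}, a_{j,t}). -/
open scoped BigOperators

/-! Common framework for finite *product-structured* Markov games.  Agents are
indexed by `Fin N`; agent `i` has local finite state space `S i` and finite
action space `A i`.  The global state space is `∀ i, S i`, the transition
kernel factorizes per agent, the initial distribution is a product, and each
agent uses a local directly parameterized policy `θ i : S i → A i → ℝ`. -/

section ProdMGDefs

variable {N : ℕ} {S A : Fin N → Type}
variable [∀ i, Fintype (S i)] [∀ i, Fintype (A i)]

/-- Joint policy `π_θ(a|s) = ∏ i, θ_i(a_i|s_i)` induced by the local
directly parameterized policies. -/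
def jointPiL (θ : ∀ i, S i → A i → ℝ) : (∀ i, S i) → (∀ i, A i) → ℝ :=
  fun s a => ∏ i, θ i (s i) (a i)

/-- Factorized transition kernel `P(s'|s,a) = ∏ i, P_i(s_i'|s_i,a_i)`. -/
def jointP (P : ∀ i, S i → A i → S i → ℝ) :
    (∀ i, S i) → (∀ i, A i) → (∀ i, S i) → ℝ :=
  fun s a s' => ∏ i, P i (s i) (a i) (s' i)

/-- Product initial state distribution `ρ = ρ_1 ⊗ ⋯ ⊗ ρ_N`. -/
def jointRho (ρ : ∀ i, S i → ℝ) : (∀ i, S i) → ℝ :=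
  fun s => ∏ i, ρ i (s i)

/-- The feasible set of local policy profiles: each `θ i (s i)` lies in the
probability simplex `Δ(A i)`. -/
def feasibleL (θ : ∀ i, S i → A i → ℝ) : Prop :=
  ∀ i, ∀ si, θ i si ∈ stdSimplex ℝ (A i)

end ProdMGDefs

/-!
Split the potential as `φ = r_i + g`, where `g` collects the terms not involving agent `i`; the
pairs `(i, j)` with `j > i` are moved into `r_i` using the symmetry `r_ij = r_ji`. It then suffices
that the expected discounted value of `g` is unchanged when agent `i` deviates. Because both the
transition kernel and the policy factorize, summing out agent `i`'s own action and next local state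
(whose weights sum to one) shows, by induction on `t`, that `E[g(s_t, a_t)]` does not depend on
`θ_i` for any `g` that ignores agent `i`'s coordinates.
-/

open Finset Function

lemma Fintype.sum_prod_mul_eq_of_dependsOn {R : Type*} [CommSemiring R] {ι : Type*} [Fintype ι]
    [DecidableEq ι] {δ : ι → Type*} [∀ j, Fintype (δ j)] (i : ι) {F F' : ∀ j, δ j → R}
    (hF : ∀ j ≠ i, F' j = F j) (hi : ∑ v, F' i v = ∑ v, F i v)
    {h : (∀ j, δ j) → R} (hh : DependsOn h {i}ᶜ) :
    ∑ x, (∏ j, F' j (x j)) * h x = ∑ x, (∏ j, F j (x j)) * h x := by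
  set e := Equiv.piSplitAt i δ
  have split : ∀ G : ∀ j, δ j → R, ∑ x, (∏ j, G j (x j)) * h x =
      ∑ v, G i v * ∑ y, (∏ j : {j // j ≠ i}, G j (y j)) * h (e.symm (v, y)) := by
    intro G
    rw [← e.symm.sum_comp, Fintype.sum_prod_type]
    refine Finset.sum_congr rfl fun v _ => ?_
    rw [mul_sum]
    refine Finset.sum_congr rfl fun y _ => ?_
    rw [Fintype.prod_eq_mul_prod_subtype_ne _ i, mul_assoc]
    simp only [e, Equiv.piSplitAt_symm_apply]
    congr 3 with j
    rw [dif_neg j.2]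
  have hindep : ∀ v v' y, h (e.symm (v, y)) = h (e.symm (v', y)) := fun v v' y =>
    hh fun j hj => by simp [e, Equiv.piSplitAt_symm_apply, Set.mem_compl_singleton_iff.mp hj]
  rw [split, split]
  simp_rw [fun j : {j // j ≠ i} => hF j j.2]
  rcases isEmpty_or_nonempty (δ i) with _ | ⟨⟨v₀⟩⟩
  · simp
  · simp_rw [hindep _ v₀, ← sum_mul, hi]

lemma sum_sum_filter_lt_eq_sum_erase_add {ι M : Type*} [Fintype ι] [LinearOrder ι]
    [AddCommMonoid M] (R : ι → ι → M) (i : ι) (hR : ∀ j ≠ i, R j i = R i j) :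
    ∑ k, ∑ j ∈ univ.filter (· < k), R k j =
      ∑ j ∈ univ.erase i, R i j +
        ∑ k ∈ univ.erase i, ∑ j ∈ (univ.filter (· < k)).erase i, R k j := by
  calc ∑ k, ∑ j ∈ univ.filter (· < k), R k j
      = ∑ j ∈ univ.filter (· < i), R i j +
          ∑ k ∈ univ.erase i, ∑ j ∈ univ.filter (· < k), R k j :=
        (add_sum_erase _ _ (mem_univ i)).symm
    _ = ∑ j ∈ univ.filter (· < i), R i j + ∑ k ∈ univ.erase i,
          ((if i < k then R i k else 0) + ∑ j ∈ (univ.filter (· < k)).erase i, R k j) := by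
        congr 1
        refine sum_congr rfl fun k hk => ?_
        split_ifs with hik
        · rw [← hR k (ne_of_mem_erase hk), add_sum_erase _ _ (by simpa using hik)]
        · rw [erase_eq_of_notMem (by simpa using hik), zero_add]
    _ = (∑ j ∈ univ.filter (· < i), R i j + ∑ j ∈ univ.filter (i < ·), R i j) +
          ∑ k ∈ univ.erase i, ∑ j ∈ (univ.filter (· < k)).erase i, R k j := by
        rw [sum_add_distrib, ← add_assoc, sum_ite, sum_const_zero, add_zero, filter_erase,
          erase_eq_of_notMem (by simp)]
    _ = _ := by
        rw [← sum_union (disjoint_filter.mpr fun j _ hj => not_lt_of_gt hj)]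
        congr 2
        ext j
        simp [lt_or_lt_iff_ne]

section MarkovChain

variable {σ α : Type} [Fintype σ] [Fintype α]

lemma dirac_mem_stdSimplex [DecidableEq σ] (s : σ) : dirac s ∈ stdSimplex ℝ σ :=
  ⟨fun s' => by unfold dirac; positivity, by simp [dirac]⟩

lemma abs_sum_mul_le_of_mem_stdSimplex_s10 {w : σ → ℝ} (hw : w ∈ stdSimplex ℝ σ) (g : σ → ℝ) :
    |∑ x, w x * g x| ≤ ∑ x, |g x| :=
  (abs_sum_le_sum_abs _ _).trans <| sum_le_sum fun x _ => by
    rw [abs_mul, abs_of_nonneg (hw.1 x)]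
    exact mul_le_of_le_one_left (abs_nonneg _) (mem_Icc_of_mem_stdSimplex hw x).2

variable (P : σ → α → σ → ℝ) (π : σ → α → ℝ) (ρ : σ → ℝ)

/-- The expectation `E[f(s_t, a_t)]` at time `t`. -/
def expAt (t : ℕ) (f : σ → α → ℝ) : ℝ :=
  ∑ s, stateDist P π ρ t s * ∑ a, π s a * f s a

lemma expDisc_eq_tsum_expAt (γ : ℝ) (f : σ → α → ℝ) :
    expDisc γ P π ρ f = ∑' t, γ ^ t * expAt P π ρ t f := by
  simp only [expDisc, expAt, Finset.mul_sum, mul_assoc]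

lemma expAt_succ (t : ℕ) (f : σ → α → ℝ) :
    expAt P π ρ (t + 1) f =
      expAt P π ρ t (fun s a => ∑ s', P s a s' * ∑ a', π s' a' * f s' a') := by
  simp only [expAt, stateDist, Finset.sum_mul]
  rw [sum_comm]
  refine sum_congr rfl fun s _ => ?_
  rw [sum_comm, Finset.mul_sum]
  refine sum_congr rfl fun a _ => ?_
  simp only [mul_assoc]
  rw [← Finset.mul_sum, ← Finset.mul_sum]

lemma expAt_add (t : ℕ) (f g : σ → α → ℝ) :
    expAt P π ρ t (fun s a => f s a + g s a) = expAt P π ρ t f + expAt P π ρ t g := by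
  simp only [expAt, mul_add, sum_add_distrib]

variable {P π ρ}

lemma stateDist_mem_stdSimplex (hP : ∀ s a, P s a ∈ stdSimplex ℝ σ)
    (hπ : ∀ s, π s ∈ stdSimplex ℝ α) (hρ : ρ ∈ stdSimplex ℝ σ) (t : ℕ) :
    stateDist P π ρ t ∈ stdSimplex ℝ σ := by
  induction t with
  | zero => exact hρ
  | succ t ih =>
    refine ⟨fun s' => sum_nonneg fun s _ => sum_nonneg fun a _ =>
      mul_nonneg (mul_nonneg (ih.1 s) ((hπ s).1 a)) ((hP s a).1 s'), ?_⟩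
    calc ∑ s', ∑ s, ∑ a, stateDist P π ρ t s * π s a * P s a s'
        = ∑ s, stateDist P π ρ t s * ∑ a, π s a * ∑ s', P s a s' := by
          simp only [Finset.mul_sum, mul_assoc]
          rw [sum_comm]
          exact sum_congr rfl fun s _ => sum_comm
      _ = 1 := by simp [(hP _ _).2, (hπ _).2, ih.2]

lemma abs_expAt_le (hP : ∀ s a, P s a ∈ stdSimplex ℝ σ)
    (hπ : ∀ s, π s ∈ stdSimplex ℝ α) (hρ : ρ ∈ stdSimplex ℝ σ) (t : ℕ) (f : σ → α → ℝ) :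
    |expAt P π ρ t f| ≤ ∑ s, ∑ a, |f s a| := by
  have hd := stateDist_mem_stdSimplex hP hπ hρ t
  exact (abs_sum_mul_le_of_mem_stdSimplex_s10 hd _).trans
    (sum_le_sum fun s _ => abs_sum_mul_le_of_mem_stdSimplex_s10 (hπ s) _)

lemma summable_expAt {γ : ℝ} (hγ0 : 0 ≤ γ) (hγ1 : γ < 1) (hP : ∀ s a, P s a ∈ stdSimplex ℝ σ)
    (hπ : ∀ s, π s ∈ stdSimplex ℝ α) (hρ : ρ ∈ stdSimplex ℝ σ) (f : σ → α → ℝ) :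
    Summable fun t => γ ^ t * expAt P π ρ t f := by
  refine .of_norm_bounded ((summable_geometric_of_lt_one hγ0 hγ1).mul_right
    (∑ s, ∑ a, |f s a|)) fun t => ?_
  rw [norm_mul, norm_pow, Real.norm_of_nonneg hγ0, Real.norm_eq_abs]
  exact mul_le_mul_of_nonneg_left (abs_expAt_le hP hπ hρ t f) (pow_nonneg hγ0 t)

lemma expDisc_add {γ : ℝ} (hγ0 : 0 ≤ γ) (hγ1 : γ < 1) (hP : ∀ s a, P s a ∈ stdSimplex ℝ σ)
    (hπ : ∀ s, π s ∈ stdSimplex ℝ α) (hρ : ρ ∈ stdSimplex ℝ σ) (f g : σ → α → ℝ) :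
    expDisc γ P π ρ (fun s a => f s a + g s a) = expDisc γ P π ρ f + expDisc γ P π ρ g := by
  simp only [expDisc_eq_tsum_expAt, expAt_add, mul_add]
  exact (summable_expAt hγ0 hγ1 hP hπ hρ f).tsum_add (summable_expAt hγ0 hγ1 hP hπ hρ g)

end MarkovChain

section ProductGame

variable {N : ℕ} {S A : Fin N → Type}

lemma jointPiL_mem_stdSimplex [∀ i, Fintype (A i)] {θ : ∀ i, S i → A i → ℝ} (hθ : feasibleL θ)
    (s : ∀ i, S i) :
    jointPiL θ s ∈ stdSimplex ℝ (∀ i, A i) := by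
  classical
  refine ⟨fun a => prod_nonneg fun j _ => (hθ j (s j)).1 (a j), ?_⟩
  simp only [jointPiL]
  rw [← Fintype.piFinset_univ, ← prod_univ_sum]
  exact prod_eq_one fun j _ => (hθ j (s j)).2

lemma jointP_mem_stdSimplex [∀ i, Fintype (S i)] {P : ∀ i, S i → A i → S i → ℝ}
    (hP : ∀ i si ai, P i si ai ∈ stdSimplex ℝ (S i)) (s : ∀ i, S i) (a : ∀ i, A i) :
    jointP P s a ∈ stdSimplex ℝ (∀ i, S i) :=
  jointPiL_mem_stdSimplex (θ := fun i si s'i => P i si (a i) s'i) (fun i si => hP i si (a i)) s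

lemma feasibleL_update [∀ i, Fintype (A i)] [∀ i, DecidableEq (S i)] {θ : ∀ i, S i → A i → ℝ}
    (hθ : feasibleL θ) (i : Fin N) {θi' : S i → A i → ℝ}
    (hθi' : ∀ si, θi' si ∈ stdSimplex ℝ (A i)) :
    feasibleL (update θ i θi') := by
  intro j sj
  rcases eq_or_ne j i with rfl | hj
  · simpa using hθi' sj
  · simpa [hj] using hθ j sj

def IgnoresAgent (i : Fin N) (g : (∀ j, S j) → (∀ j, A j) → ℝ) : Prop :=
  ∀ ⦃s s' a a'⦄, (∀ j ≠ i, s j = s' j) → (∀ j ≠ i, a j = a' j) → g s a = g s' a'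

variable {i : Fin N}

lemma sum_jointPiL_mul_eq [∀ i, Fintype (A i)] {θ θ' : ∀ j, S j → A j → ℝ}
    (hθθ' : ∀ j ≠ i, θ' j = θ j) (hθ : ∀ si, ∑ a, θ i si a = 1) (hθ' : ∀ si, ∑ a, θ' i si a = 1)
    {g : (∀ j, S j) → (∀ j, A j) → ℝ} (hg : IgnoresAgent i g)
    {s s' : ∀ j, S j} (hs : ∀ j ≠ i, s j = s' j) :
    ∑ a, jointPiL θ' s a * g s a = ∑ a, jointPiL θ s' a * g s' a := by
  classical
  simp_rw [hg hs fun _ _ => rfl]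
  exact Fintype.sum_prod_mul_eq_of_dependsOn i (fun j hj => by rw [hθθ' j hj, hs j hj])
    ((hθ' (s i)).trans (hθ (s' i)).symm) fun a a' ha => hg (fun _ _ => rfl) ha

lemma ignoresAgent_sum_jointP_mul [∀ i, Fintype (S i)] [∀ i, Fintype (A i)]
    {P : ∀ j, S j → A j → S j → ℝ} (hP : ∀ si ai, ∑ s', P i si ai s' = 1) {θ : ∀ j, S j → A j → ℝ}
    (hθ : ∀ si, ∑ a, θ i si a = 1) {g : (∀ j, S j) → (∀ j, A j) → ℝ} (hg : IgnoresAgent i g) :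
    IgnoresAgent i fun s a => ∑ s', jointP P s a s' * ∑ a', jointPiL θ s' a' * g s' a' := by
  classical
  intro s s' a a' hs ha
  exact Fintype.sum_prod_mul_eq_of_dependsOn i (fun j hj => by rw [hs j hj, ha j hj])
    ((hP _ _).trans (hP _ _).symm)
    fun x y hxy => sum_jointPiL_mul_eq (fun _ _ => rfl) hθ hθ hg hxy

lemma expAt_eq_of_ignoresAgent [∀ i, Fintype (S i)] [∀ i, Fintype (A i)]
    {P : ∀ j, S j → A j → S j → ℝ} (hP : ∀ si ai, ∑ s', P i si ai s' = 1)
    {θ θ' : ∀ j, S j → A j → ℝ} (hθθ' : ∀ j ≠ i, θ' j = θ j) (hθ : ∀ si, ∑ a, θ i si a = 1)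
    (hθ' : ∀ si, ∑ a, θ' i si a = 1) (ρ : (∀ j, S j) → ℝ) (t : ℕ)
    {g : (∀ j, S j) → (∀ j, A j) → ℝ} (hg : IgnoresAgent i g) :
    expAt (jointP P) (jointPiL θ') ρ t g = expAt (jointP P) (jointPiL θ) ρ t g := by
  have hswap : ∀ {g}, IgnoresAgent i g → ∀ s,
      ∑ a, jointPiL θ' s a * g s a = ∑ a, jointPiL θ s a * g s a :=
    fun hg s => sum_jointPiL_mul_eq hθθ' hθ hθ' hg fun _ _ => rfl
  induction t generalizing g with
  | zero => simp only [expAt, stateDist, hswap hg]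
  | succ t ih =>
    simp only [expAt_succ, hswap hg]
    exact ih (ignoresAgent_sum_jointP_mul hP hθ hg)

lemma expDisc_eq_of_ignoresAgent [∀ i, Fintype (S i)] [∀ i, Fintype (A i)]
    {P : ∀ j, S j → A j → S j → ℝ} (hP : ∀ si ai, ∑ s', P i si ai s' = 1)
    {θ θ' : ∀ j, S j → A j → ℝ} (hθθ' : ∀ j ≠ i, θ' j = θ j) (hθ : ∀ si, ∑ a, θ i si a = 1)
    (hθ' : ∀ si, ∑ a, θ' i si a = 1) (γ : ℝ) (ρ : (∀ j, S j) → ℝ)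
    {g : (∀ j, S j) → (∀ j, A j) → ℝ} (hg : IgnoresAgent i g) :
    expDisc γ (jointP P) (jointPiL θ') ρ g = expDisc γ (jointP P) (jointPiL θ) ρ g := by
  simp only [expDisc_eq_tsum_expAt, expAt_eq_of_ignoresAgent hP hθθ' hθ hθ' ρ _ hg]

lemma expDisc_sub_eq_of_ignoresAgent [∀ i, Fintype (S i)] [∀ i, Fintype (A i)]
    [∀ i, DecidableEq (S i)] {γ : ℝ} (hγ0 : 0 ≤ γ) (hγ1 : γ < 1)
    {P : ∀ i, S i → A i → S i → ℝ} (hP : ∀ i si ai, P i si ai ∈ stdSimplex ℝ (S i))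
    {ρ : (∀ i, S i) → ℝ} (hρ : ρ ∈ stdSimplex ℝ (∀ i, S i))
    {θ : ∀ i, S i → A i → ℝ} (hθ : feasibleL θ) (i : Fin N) {θi' : S i → A i → ℝ}
    (hθi' : ∀ si, θi' si ∈ stdSimplex ℝ (A i)) {r φ : (∀ j, S j) → (∀ j, A j) → ℝ}
    (hφr : IgnoresAgent i fun s a => φ s a - r s a) :
    expDisc γ (jointP P) (jointPiL (update θ i θi')) ρ r -
        expDisc γ (jointP P) (jointPiL θ) ρ r =
      expDisc γ (jointP P) (jointPiL (update θ i θi')) ρ φ -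
        expDisc γ (jointP P) (jointPiL θ) ρ φ := by
  have hθ' := feasibleL_update hθ i hθi'
  have hdecomp : φ = fun s a => r s a + (φ s a - r s a) := by
    funext s a
    ring
  have hindep := expDisc_eq_of_ignoresAgent (fun si ai => (hP i si ai).2)
    (fun j hj => update_of_ne hj θi' θ) (fun si => (hθ i si).2) (fun si => (hθ' i si).2) γ ρ hφr
  conv_rhs => rw [hdecomp]
  rw [expDisc_add hγ0 hγ1 (jointP_mem_stdSimplex hP) (jointPiL_mem_stdSimplex hθ') hρ,
    expDisc_add hγ0 hγ1 (jointP_mem_stdSimplex hP) (jointPiL_mem_stdSimplex hθ) hρ, hindep]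
  ring

end ProductGame

section MixedRewards

variable {N : ℕ} {S A : Fin N → Type}

def mixedReward (α β : ℝ) (rself : ∀ i, S i → A i → ℝ)
    (rpair : ∀ i j : Fin N, S i → S j → A i → A j → ℝ) (i : Fin N)
    (s : ∀ j, S j) (a : ∀ j, A j) : ℝ :=
  α * rself i (s i) (a i) + β * ∑ j ∈ univ.erase i, rpair i j (s i) (s j) (a i) (a j)

def mixedPotential (α β : ℝ) (rself : ∀ i, S i → A i → ℝ)
    (rpair : ∀ i j : Fin N, S i → S j → A i → A j → ℝ)
    (s : ∀ j, S j) (a : ∀ j, A j) : ℝ :=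
  α * ∑ k, rself k (s k) (a k) +
    β * ∑ k, ∑ j ∈ univ.filter (· < k), rpair k j (s k) (s j) (a k) (a j)

lemma ignoresAgent_mixedPotential_sub_mixedReward (α β : ℝ) (rself : ∀ i, S i → A i → ℝ)
    (rpair : ∀ i j : Fin N, S i → S j → A i → A j → ℝ)
    (hsym : ∀ i j : Fin N, i ≠ j → ∀ si sj ai aj, rpair i j si sj ai aj = rpair j i sj si aj ai)
    (i : Fin N) :
    IgnoresAgent i fun s a =>
      mixedPotential α β rself rpair s a - mixedReward α β rself rpair i s a := by
  have hrest : ∀ s a, mixedPotential α β rself rpair s a - mixedReward α β rself rpair i s a =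
      α * ∑ k ∈ univ.erase i, rself k (s k) (a k) + β * ∑ k ∈ univ.erase i,
        ∑ j ∈ (univ.filter (· < k)).erase i, rpair k j (s k) (s j) (a k) (a j) := by
    intro s a
    rw [mixedPotential, mixedReward, ← add_sum_erase _ _ (mem_univ i),
      sum_sum_filter_lt_eq_sum_erase_add _ i fun j hj => hsym j i hj _ _ _ _]
    ring
  intro s s' a a' hs ha
  simp only [hrest]
  congr 2
  · exact sum_congr rfl fun k hk => by rw [hs k (ne_of_mem_erase hk), ha k (ne_of_mem_erase hk)]
  · refine sum_congr rfl fun k hk => sum_congr rfl fun j hj => ?_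
    rw [hs k (ne_of_mem_erase hk), ha k (ne_of_mem_erase hk), hs j (ne_of_mem_erase hj),
      ha j (ne_of_mem_erase hj)]

end MixedRewards

theorem mpg_construction_from_mixed_rewards_general
    {N : ℕ} {S A : Fin N → Type}
    [∀ i, Fintype (S i)] [∀ i, DecidableEq (S i)] [∀ i, Fintype (A i)]
    (γ : ℝ) (hγ0 : 0 ≤ γ) (hγ1 : γ < 1)
    (P : ∀ i, S i → A i → S i → ℝ)
    (hP : ∀ i si ai, P i si ai ∈ stdSimplex ℝ (S i))
    (α β : ℝ)
    (rself : ∀ i, S i → A i → ℝ)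
    (rpair : ∀ i j : Fin N, S i → S j → A i → A j → ℝ)
    -- symmetry of the pairwise rewards:
    (hsym : ∀ i j : Fin N, i ≠ j → ∀ si sj ai aj,
      rpair i j si sj ai aj = rpair j i sj si aj ai) :
    ∀ i : Fin N, ∀ θ : ∀ j, S j → A j → ℝ, feasibleL θ →
      ∀ θi' : S i → A i → ℝ, (∀ si, θi' si ∈ stdSimplex ℝ (A i)) →
        ∀ s : ∀ j, S j,
          expDisc γ (jointP P) (jointPiL (Function.update θ i θi')) (dirac s)
              (fun st b => α * rself i (st i) (b i)
                + β * ∑ j ∈ Finset.univ.erase i,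
                    rpair i j (st i) (st j) (b i) (b j))
            - expDisc γ (jointP P) (jointPiL θ) (dirac s)
              (fun st b => α * rself i (st i) (b i)
                + β * ∑ j ∈ Finset.univ.erase i,
                    rpair i j (st i) (st j) (b i) (b j))
          = expDisc γ (jointP P) (jointPiL (Function.update θ i θi')) (dirac s)
              (fun st b => α * ∑ k, rself k (st k) (b k)
                + β * ∑ k, ∑ j ∈ Finset.univ.filter (fun j => j < k),
                    rpair k j (st k) (st j) (b k) (b j))
            - expDisc γ (jointP P) (jointPiL θ) (dirac s)
              (fun st b => α * ∑ k, rself k (st k) (b k)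
                + β * ∑ k, ∑ j ∈ Finset.univ.filter (fun j => j < k),
                    rpair k j (st k) (st j) (b k) (b j)) :=
  fun i _ hθ _ hθi' s => expDisc_sub_eq_of_ignoresAgent hγ0 hγ1 hP (dirac_mem_stdSimplex s) hθ i
    hθi' (ignoresAgent_mixedPotential_sub_mixedReward α β rself rpair hsym i)

/-- **MPG construction from mixed rewards.** In a finite
product-structured Markov game where each agent's reward has the mixed form
`r_i = α r_i^self(s_i,a_i) + β ∑_{j ≠ i} r_ij(s_i,s_j,a_i,a_j)` with symmetric
pairwise terms, the game is a Markov potential game with potential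
`φ(s,a) = α ∑ i, r_i^self(s_i,a_i) + β ∑ i, ∑_{j < i} r_ij`. -/
theorem mpg_construction_from_mixed_rewards
    {N : ℕ} {S A : Fin N → Type}
    [∀ i, Fintype (S i)] [∀ i, DecidableEq (S i)] [∀ i, Fintype (A i)]
    [∀ i, Nonempty (S i)] [∀ i, Nonempty (A i)]
    (γ : ℝ) (hγ0 : 0 ≤ γ) (hγ1 : γ < 1)
    (P : ∀ i, S i → A i → S i → ℝ)
    (hP : ∀ i si ai, P i si ai ∈ stdSimplex ℝ (S i))
    (ρ : ∀ i, S i → ℝ) (hρ : ∀ i, ρ i ∈ stdSimplex ℝ (S i))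
    (α β : ℝ)
    (rself : ∀ i, S i → A i → ℝ)
    (rpair : ∀ i j : Fin N, S i → S j → A i → A j → ℝ)
    -- symmetry of the pairwise rewards:
    (hsym : ∀ i j : Fin N, i ≠ j → ∀ si sj ai aj,
      rpair i j si sj ai aj = rpair j i sj si aj ai) :
    ∀ i : Fin N, ∀ θ : ∀ j, S j → A j → ℝ, feasibleL θ →
      ∀ θi' : S i → A i → ℝ, (∀ si, θi' si ∈ stdSimplex ℝ (A i)) →
        ∀ s : ∀ j, S j,
          expDisc γ (jointP P) (jointPiL (Function.update θ i θi')) (dirac s)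
              (fun st b => α * rself i (st i) (b i)
                + β * ∑ j ∈ Finset.univ.erase i,
                    rpair i j (st i) (st j) (b i) (b j))
            - expDisc γ (jointP P) (jointPiL θ) (dirac s)
              (fun st b => α * rself i (st i) (b i)
                + β * ∑ j ∈ Finset.univ.erase i,
                    rpair i j (st i) (st j) (b i) (b j))
          = expDisc γ (jointP P) (jointPiL (Function.update θ i θi')) (dirac s)
              (fun st b => α * ∑ k, rself k (st k) (b k)
                + β * ∑ k, ∑ j ∈ Finset.univ.filter (fun j => j < k),
                    rpair k j (st k) (st j) (b k) (b j))
            - expDisc γ (jointP P) (jointPiL θ) (dirac s)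
              (fun st b => α * ∑ k, rself k (st k) (b k)
                + β * ∑ k, ∑ j ∈ Finset.univ.filter (fun j => j < k),
                    rpair k j (st k) (st j) (b k) (b j)) :=
  mpg_construction_from_mixed_rewards_general γ hγ0 hγ1 P hP α β rself rpair hsym
end
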